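/- arXiv:2602.22178 — 2 statements merged into one kernel-verified Lean document; each statement's English description precedes it below -/
import Mathlib

section
/- The cumulative distribution function Γ₂(x, ν) of the non-central chi-squared distribution with 2 degrees of freedom is strictly decreasing in the noncentrality parameter ν for each fixed x > 0. -/
open MeasureTheory ProbabilityTheory Real Filter Set

/-- Modified Bessel function of the first kind, order 0. -/
noncomputable def besselI0 (z : ℝ) : ℝ :=
  ∑' k : ℕ, (z / 2) ^ (2 * k) / ((Nat.factorial k : ℝ)) ^ 2

/-- Density of the non-central chi-squared distribution with 2 degrees of
freedom and noncentrality `ν`. -/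
noncomputable def ncChi2Pdf (ν t : ℝ) : ℝ :=
  (1 / 2) * Real.exp (-(t + ν) / 2) * besselI0 (Real.sqrt (ν * t))

/-- Cdf `Γ₂ x ν` of the non-central chi-squared distribution with 2 degrees
of freedom and noncentrality `ν`. -/
noncomputable def Gamma2 (x ν : ℝ) : ℝ := ∫ t in (0:ℝ)..x, ncChi2Pdf ν t

/-!
Expanding `I₀` in its power series and integrating term by term gives
`Γ₂(x, ν) = exp (-ν / 2) * ∑ aₖ νᵏ` with `aₖ = mₖ / (4ᵏ k!²)` and `mₖ = ∫₀ˣ tᵏ e^{-t/2} / 2 dt`.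
Differentiating in `ν`, `∂Γ₂/∂ν = exp (-ν / 2) * ∑ ((k + 1) aₖ₊₁ - aₖ / 2) νᵏ`, and every
coefficient is negative: integration by parts gives
`mₖ₊₁ = 2 (k + 1) mₖ - xᵏ⁺¹ e^{-x/2} < 2 (k + 1) mₖ`.
-/

section PowerSeries

variable {a : ℕ → ℝ}

lemma summable_natCast_mul_abs_mul_pow (ha : ∀ r, Summable fun k => |a k| * r ^ k) (r : ℝ) :
    Summable fun k : ℕ => (k : ℝ) * |a k| * r ^ k := by
  refine (ha (2 * |r|)).of_norm_bounded fun k => ?_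
  have hk : (k : ℝ) ≤ 2 ^ k := by exact_mod_cast (Nat.lt_two_pow_self).le
  rw [Real.norm_eq_abs, abs_mul, abs_mul, abs_abs, Nat.abs_cast, abs_pow, mul_pow]
  calc (k : ℝ) * |a k| * |r| ^ k = |a k| * ((k : ℝ) * |r| ^ k) := by ring
    _ ≤ |a k| * (2 ^ k * |r| ^ k) := by gcongr

lemma summable_mul_pow (ha : ∀ r, Summable fun k => |a k| * r ^ k) (y : ℝ) :
    Summable fun k => a k * y ^ k :=
  (ha |y|).of_norm_bounded fun k => by rw [Real.norm_eq_abs, abs_mul, abs_pow]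

lemma summable_succ_mul_mul_pow (ha : ∀ r, Summable fun k => |a k| * r ^ k) (y : ℝ) :
    Summable fun k : ℕ => ((k : ℝ) + 1) * a (k + 1) * y ^ k := by
  set R := |y| + 1
  have hR : |y| ≤ R := by simp [R]
  refine ((summable_nat_add_iff 1).2 (summable_natCast_mul_abs_mul_pow ha R)).of_norm_bounded
    fun k => ?_
  rw [Real.norm_eq_abs, abs_mul, abs_mul, abs_pow, Nat.cast_succ,
    abs_of_pos (by positivity : (0 : ℝ) < k + 1)]
  calc ((k : ℝ) + 1) * |a (k + 1)| * |y| ^ k ≤ ((k : ℝ) + 1) * |a (k + 1)| * R ^ (k + 1) := by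
        gcongr
        calc |y| ^ k ≤ R ^ k := by gcongr
          _ ≤ R ^ (k + 1) := pow_le_pow_right₀ (by simp [R]) k.le_succ

lemma hasDerivAt_tsum_mul_pow (ha : ∀ r, Summable fun k => |a k| * r ^ k) (y : ℝ) :
    HasDerivAt (fun z => ∑' k, a k * z ^ k)
      (∑' k : ℕ, ((k : ℝ) + 1) * a (k + 1) * y ^ k) y := by
  set R := |y| + 1
  have hbound : ∀ (k : ℕ), ∀ z ∈ Metric.ball (0 : ℝ) R,
      ‖a k * ((k : ℝ) * z ^ (k - 1))‖ ≤ (k : ℝ) * |a k| * R ^ k := by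
    intro k z hz
    rw [mem_ball_zero_iff, Real.norm_eq_abs] at hz
    rw [Real.norm_eq_abs, abs_mul, abs_mul, Nat.abs_cast, abs_pow]
    calc |a k| * ((k : ℝ) * |z| ^ (k - 1)) ≤ |a k| * ((k : ℝ) * R ^ k) := by
          gcongr
          calc |z| ^ (k - 1) ≤ R ^ (k - 1) := by gcongr
            _ ≤ R ^ k := pow_le_pow_right₀ (by simp [R]) (Nat.sub_le k 1)
      _ = (k : ℝ) * |a k| * R ^ k := by ring
  have hy : y ∈ Metric.ball (0 : ℝ) R := by simp [R]
  have hshift : ∀ k : ℕ, a (k + 1) * (((k + 1 : ℕ) : ℝ) * y ^ (k + 1 - 1))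
      = ((k : ℝ) + 1) * a (k + 1) * y ^ k := fun k => by
    rw [Nat.add_sub_cancel]; push_cast; ring
  have hsum : Summable fun k : ℕ => a k * ((k : ℝ) * y ^ (k - 1)) :=
    (summable_nat_add_iff 1).1 (by simpa only [hshift] using summable_succ_mul_mul_pow ha y)
  have hderiv := hasDerivAt_tsum_of_isPreconnected (summable_natCast_mul_abs_mul_pow ha R)
    Metric.isOpen_ball (convex_ball 0 R).isPreconnected
    (fun k z _ => (hasDerivAt_pow k z).const_mul (a k)) hbound hy (summable_mul_pow ha y) hy
  rwa [hsum.tsum_eq_zero_add, Nat.cast_zero, zero_mul, mul_zero, zero_add,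
    tsum_congr hshift] at hderiv

lemma strictAntiOn_exp_mul_tsum_mul_pow (ha : ∀ r, Summable fun k => |a k| * r ^ k)
    (hcoeff : ∀ k : ℕ, ((k : ℝ) + 1) * a (k + 1) < a k / 2) :
    StrictAntiOn (fun ν => exp (-ν / 2) * ∑' k, a k * ν ^ k) (Ici 0) := by
  have hderiv : ∀ ν, HasDerivAt (fun ν => exp (-ν / 2) * ∑' k, a k * ν ^ k)
      (exp (-ν / 2) * ∑' k : ℕ, (((k : ℝ) + 1) * a (k + 1) - a k / 2) * ν ^ k) ν := by
    intro ν
    refine (((hasDerivAt_neg ν).div_const 2).exp.mul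
      (hasDerivAt_tsum_mul_pow ha ν)).congr_deriv ?_
    have hsplit : ∑' k : ℕ, (((k : ℝ) + 1) * a (k + 1) - a k / 2) * ν ^ k
        = ∑' k : ℕ, ((k : ℝ) + 1) * a (k + 1) * ν ^ k - (∑' k, a k * ν ^ k) / 2 := by
      rw [← tsum_div_const,
        ← (summable_succ_mul_mul_pow ha ν).tsum_sub ((summable_mul_pow ha ν).div_const 2)]
      exact tsum_congr fun k => by ring
    rw [hsplit]
    ring
  refine strictAntiOn_of_hasDerivWithinAt_neg (convex_Ici 0)
    (fun ν _ => (hderiv ν).continuousAt.continuousWithinAt)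
    (fun ν _ => (hderiv ν).hasDerivWithinAt) fun ν hν => ?_
  rw [interior_Ici, mem_Ioi] at hν
  refine mul_neg_of_pos_of_neg (exp_pos _) ?_
  have hsummable : Summable fun k : ℕ => (((k : ℝ) + 1) * a (k + 1) - a k / 2) * ν ^ k :=
    ((summable_succ_mul_mul_pow ha ν).sub ((summable_mul_pow ha ν).div_const 2)).congr
      fun k => by ring
  have hnonpos : ∀ k : ℕ, (((k : ℝ) + 1) * a (k + 1) - a k / 2) * ν ^ k ≤ 0 := fun k =>
    mul_nonpos_of_nonpos_of_nonneg (sub_nonpos.2 (hcoeff k).le) (pow_nonneg hν.le k)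
  simpa using hsummable.tsum_lt_tsum (g := fun _ => 0) (i := 0) hnonpos
    (by simpa using hcoeff 0) summable_zero

end PowerSeries

open scoped Nat

noncomputable def chi2PartialMoment (x : ℝ) (k : ℕ) : ℝ :=
  ∫ t in (0 : ℝ)..x, t ^ k * (exp (-t / 2) / 2)

noncomputable def ncChi2Coeff (x : ℝ) (k : ℕ) : ℝ :=
  chi2PartialMoment x k / (4 ^ k * (k ! : ℝ) ^ 2)

section Coefficients

variable {x : ℝ}

lemma continuous_pow_mul_chi2Pdf (k : ℕ) :
    Continuous fun t : ℝ => t ^ k * (exp (-t / 2) / 2) := by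
  fun_prop

lemma chi2PartialMoment_nonneg (hx : 0 ≤ x) (k : ℕ) : 0 ≤ chi2PartialMoment x k :=
  intervalIntegral.integral_nonneg hx fun t ht => by have := ht.1; positivity

lemma chi2PartialMoment_le (hx : 0 ≤ x) (k : ℕ) :
    chi2PartialMoment x k ≤ x ^ (k + 1) / 2 := by
  have hle : chi2PartialMoment x k ≤ ∫ _ in (0 : ℝ)..x, x ^ k / 2 := by
    refine intervalIntegral.integral_mono_on hx
      ((continuous_pow_mul_chi2Pdf k).intervalIntegrable 0 x) intervalIntegrable_const
      fun t ⟨ht0, htx⟩ => ?_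
    have hexp : exp (-t / 2) ≤ 1 := exp_le_one_iff.2 (by linarith)
    calc t ^ k * (exp (-t / 2) / 2) ≤ x ^ k * (1 / 2) := by gcongr
      _ = x ^ k / 2 := by ring
  rw [intervalIntegral.integral_const, smul_eq_mul] at hle
  linarith [show (x - 0) * (x ^ k / 2) = x ^ (k + 1) / 2 by ring]

lemma chi2PartialMoment_succ (k : ℕ) :
    chi2PartialMoment x (k + 1) =
      2 * (k + 1) * chi2PartialMoment x k - x ^ (k + 1) * exp (-x / 2) := by
  have hderiv : ∀ t, HasDerivAt (fun t : ℝ => -(t ^ (k + 1) * exp (-t / 2)))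
      (t ^ (k + 1) * (exp (-t / 2) / 2) - 2 * (k + 1) * (t ^ k * (exp (-t / 2) / 2))) t := by
    intro t
    refine ((hasDerivAt_pow (k + 1) t).mul ((hasDerivAt_neg t).div_const 2).exp).neg.congr_deriv ?_
    push_cast
    ring
  have hk := (continuous_pow_mul_chi2Pdf k).intervalIntegrable (μ := volume) 0 x
  have hk1 := (continuous_pow_mul_chi2Pdf (k + 1)).intervalIntegrable (μ := volume) 0 x
  have hint := intervalIntegral.integral_eq_sub_of_hasDerivAt (fun t _ => hderiv t)
    (hk1.sub (hk.const_mul _))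
  rw [intervalIntegral.integral_sub hk1 (hk.const_mul _),
    intervalIntegral.integral_const_mul] at hint
  rw [zero_pow k.succ_ne_zero, zero_mul, neg_zero, sub_zero] at hint
  rw [chi2PartialMoment, chi2PartialMoment]
  linarith

lemma summable_abs_ncChi2Coeff_mul_pow (hx : 0 ≤ x) (r : ℝ) :
    Summable fun k => |ncChi2Coeff x k| * r ^ k := by
  refine ((summable_pow_div_factorial (x * |r| / 4)).mul_left (x / 2)).of_norm_bounded
    fun k => ?_
  have hfact : (1 : ℝ) ≤ k ! := by exact_mod_cast k.factorial_pos
  rw [Real.norm_eq_abs, abs_mul, abs_abs, abs_pow, ncChi2Coeff,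
    abs_of_nonneg (by have := chi2PartialMoment_nonneg hx k; positivity)]
  calc chi2PartialMoment x k / (4 ^ k * (k ! : ℝ) ^ 2) * |r| ^ k
      ≤ x ^ (k + 1) / 2 / (4 ^ k * k !) * |r| ^ k := by
        gcongr
        · exact chi2PartialMoment_le hx k
        · nlinarith
    _ = x / 2 * ((x * |r| / 4) ^ k / k !) := by
        rw [div_pow, mul_pow]
        field_simp
        ring

lemma succ_mul_ncChi2Coeff_succ_lt (hx : 0 < x) (k : ℕ) :
    ((k : ℝ) + 1) * ncChi2Coeff x (k + 1) < ncChi2Coeff x k / 2 := by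
  have hmoment : chi2PartialMoment x (k + 1) < 2 * (k + 1) * chi2PartialMoment x k := by
    rw [chi2PartialMoment_succ]
    have : 0 < x ^ (k + 1) * exp (-x / 2) := by positivity
    linarith
  rw [ncChi2Coeff, ncChi2Coeff, Nat.factorial_succ, Nat.cast_mul, Nat.cast_succ]
  calc ((k : ℝ) + 1) * (chi2PartialMoment x (k + 1) / (4 ^ (k + 1) * (((k : ℝ) + 1) * k !) ^ 2))
      = chi2PartialMoment x (k + 1) / (4 * (k + 1)) / (4 ^ k * (k ! : ℝ) ^ 2) := by
        field_simp
        ring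
    _ < 2 * (k + 1) * chi2PartialMoment x k / (4 * (k + 1)) / (4 ^ k * (k ! : ℝ) ^ 2) := by
        gcongr
    _ = chi2PartialMoment x k / (4 ^ k * (k ! : ℝ) ^ 2) / 2 := by
        field_simp
        ring

end Coefficients

lemma ncChi2Pdf_eq_tsum {ν t : ℝ} (hν : 0 ≤ ν) (ht : 0 ≤ t) :
    ncChi2Pdf ν t =
      ∑' k : ℕ, exp (-ν / 2) * ν ^ k / (4 ^ k * (k ! : ℝ) ^ 2) *
        (t ^ k * (exp (-t / 2) / 2)) := by
  rw [ncChi2Pdf, besselI0, ← tsum_mul_left]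
  refine tsum_congr fun k => ?_
  rw [div_pow, pow_mul, pow_mul, sq_sqrt (mul_nonneg hν ht), mul_pow,
    show (2 : ℝ) ^ 2 = 4 by norm_num, show -(t + ν) / 2 = -ν / 2 + -t / 2 by ring, exp_add]
  ring

lemma Gamma2_eq_exp_mul_tsum {x ν : ℝ} (hx : 0 ≤ x) (hν : 0 ≤ ν) :
    Gamma2 x ν = exp (-ν / 2) * ∑' k, ncChi2Coeff x k * ν ^ k := by
  set F : ℕ → ℝ → ℝ := fun k t =>
    exp (-ν / 2) * ν ^ k / (4 ^ k * (k ! : ℝ) ^ 2) * (t ^ k * (exp (-t / 2) / 2))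
  have hF_int : ∀ k, IntegrableOn (F k) (Ioc 0 x) := fun k =>
    (continuous_const.mul (continuous_pow_mul_chi2Pdf k)).integrableOn_Ioc
  have hF_integral :
      ∀ k, ∫ t in Ioc 0 x, F k t = exp (-ν / 2) * (ncChi2Coeff x k * ν ^ k) := by
    intro k
    rw [integral_const_mul, ← intervalIntegral.integral_of_le hx, ← chi2PartialMoment,
      ncChi2Coeff]
    ring
  have hF_norm : ∀ k, ∫ t in Ioc 0 x, ‖F k t‖ = ∫ t in Ioc 0 x, F k t := fun k =>
    setIntegral_congr_fun measurableSet_Ioc fun t ht =>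
      Real.norm_of_nonneg (by have := ht.1.le; positivity)
  have hF_sum : Summable fun k => ∫ t in Ioc 0 x, ‖F k t‖ := by
    simp only [hF_norm, hF_integral]
    exact (summable_mul_pow (summable_abs_ncChi2Coeff_mul_pow hx) ν).mul_left _
  calc Gamma2 x ν = ∫ t in Ioc 0 x, ∑' k, F k t := by
        rw [Gamma2, intervalIntegral.integral_of_le hx]
        exact setIntegral_congr_fun measurableSet_Ioc fun t ht => ncChi2Pdf_eq_tsum hν ht.1.le
    _ = ∑' k, ∫ t in Ioc 0 x, F k t :=
        (integral_tsum_of_summable_integral_norm hF_int hF_sum).symm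
    _ = exp (-ν / 2) * ∑' k, ncChi2Coeff x k * ν ^ k := by
        simp only [hF_integral, tsum_mul_left]

theorem stmt_1 (x : ℝ) (hx : 0 < x) :
    StrictAntiOn (fun ν => Gamma2 x ν) (Set.Ici 0) :=
  (strictAntiOn_exp_mul_tsum_mul_pow (summable_abs_ncChi2Coeff_mul_pow hx.le)
    (succ_mul_ncChi2Coeff_succ_lt hx)).congr fun _ hν => (Gamma2_eq_exp_mul_tsum hx.le hν).symm
end

section
/- Probability dilution for the Bayesian posterior: for fixed observed vector y ∈ ℝ² and fixed R > 0, the posterior collision probability B(R | y) = Γ₂(R²/σ², ‖y‖²/σ²) tends to 0 as σ → ∞. -/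
open MeasureTheory ProbabilityTheory Real Filter Set

/-!
On `[0, x]` the density is at most `exp (ν x / 4) / 2`, because `I₀ z ≤ exp (z² / 4)`
(compare the series termwise with the exponential series, using `k! ≤ (k!)²`).
Hence `|Γ₂(x, ν)| ≤ x exp (ν x / 4) / 2`, and with `x = R²/σ²`, `ν = ‖y‖²/σ²` both
`x` and `ν x` tend to `0` as `σ → ∞`.
-/

lemma besselI0_term_le (z : ℝ) (k : ℕ) :
    (z / 2) ^ (2 * k) / (Nat.factorial k : ℝ) ^ 2 ≤ (z ^ 2 / 4) ^ k / Nat.factorial k := by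
  have hk : (1 : ℝ) ≤ Nat.factorial k := by exact_mod_cast Nat.factorial_pos k
  rw [pow_mul, div_pow, show (2 : ℝ) ^ 2 = 4 by norm_num, sq (Nat.factorial k : ℝ),
    ← div_div]
  exact div_le_self (div_nonneg (by positivity) (by positivity)) hk

lemma besselI0_le_exp (z : ℝ) : besselI0 z ≤ exp (z ^ 2 / 4) := by
  have hexp := NormedSpace.expSeries_div_hasSum_exp (z ^ 2 / 4)
  rw [← exp_eq_exp_ℝ] at hexp
  rw [besselI0, ← hexp.tsum_eq]
  refine Summable.tsum_le_tsum (besselI0_term_le z) ?_ hexp.summable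
  refine hexp.summable.of_nonneg_of_le (fun k => ?_) (besselI0_term_le z)
  rw [pow_mul]
  positivity

lemma besselI0_nonneg (z : ℝ) : 0 ≤ besselI0 z :=
  tsum_nonneg fun k => by rw [pow_mul]; positivity

lemma ncChi2Pdf_nonneg (ν t : ℝ) : 0 ≤ ncChi2Pdf ν t := by
  have := besselI0_nonneg (sqrt (ν * t))
  unfold ncChi2Pdf
  positivity

lemma ncChi2Pdf_le {ν t : ℝ} (hν : 0 ≤ ν) (ht : 0 ≤ t) :
    ncChi2Pdf ν t ≤ exp (ν * t / 4) / 2 := by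
  have hexp : exp (-(t + ν) / 2) ≤ 1 := exp_le_one_iff.mpr (by linarith)
  have hbessel : besselI0 (sqrt (ν * t)) ≤ exp (ν * t / 4) := by
    simpa [sq_sqrt (mul_nonneg hν ht)] using besselI0_le_exp (sqrt (ν * t))
  unfold ncChi2Pdf
  calc 1 / 2 * exp (-(t + ν) / 2) * besselI0 (sqrt (ν * t))
      ≤ 1 / 2 * 1 * exp (ν * t / 4) := by
        gcongr
        exact besselI0_nonneg _
    _ = exp (ν * t / 4) / 2 := by ring

lemma norm_Gamma2_le {x ν : ℝ} (hx : 0 ≤ x) (hν : 0 ≤ ν) :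
    ‖Gamma2 x ν‖ ≤ exp (ν * x / 4) / 2 * x := by
  have hbound : ∀ t ∈ uIoc (0 : ℝ) x, ‖ncChi2Pdf ν t‖ ≤ exp (ν * x / 4) / 2 := by
    rw [uIoc_of_le hx]
    rintro t ⟨ht, htx⟩
    rw [norm_of_nonneg (ncChi2Pdf_nonneg ν t)]
    refine (ncChi2Pdf_le hν ht.le).trans ?_
    gcongr
  simpa [Gamma2, abs_of_nonneg hx] using intervalIntegral.norm_integral_le_of_norm_le_const hbound

theorem stmt_9_general (R y₁ y₂ : ℝ) :
    Tendsto (fun σ => Gamma2 (R ^ 2 / σ ^ 2) ((y₁ ^ 2 + y₂ ^ 2) / σ ^ 2)) atTop (nhds 0) := by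
  have hσ : Tendsto (fun σ : ℝ => σ ^ 2) atTop atTop := tendsto_pow_atTop two_ne_zero
  have hx : Tendsto (fun σ : ℝ => R ^ 2 / σ ^ 2) atTop (nhds 0) :=
    tendsto_const_nhds.div_atTop hσ
  have hν : Tendsto (fun σ : ℝ => (y₁ ^ 2 + y₂ ^ 2) / σ ^ 2) atTop (nhds 0) :=
    tendsto_const_nhds.div_atTop hσ
  have hbound : Tendsto (fun σ : ℝ => exp ((y₁ ^ 2 + y₂ ^ 2) / σ ^ 2 * (R ^ 2 / σ ^ 2) / 4) / 2
      * (R ^ 2 / σ ^ 2)) atTop (nhds 0) := by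
    simpa using ((((hν.mul hx).div_const 4).rexp).div_const 2).mul hx
  exact squeeze_zero_norm (fun σ => norm_Gamma2_le (by positivity) (by positivity)) hbound

theorem stmt_9 (R y₁ y₂ : ℝ) (hR : 0 < R) :
    Tendsto (fun σ => Gamma2 (R ^ 2 / σ ^ 2) ((y₁ ^ 2 + y₂ ^ 2) / σ ^ 2)) atTop (nhds 0) :=
  stmt_9_general R y₁ y₂
end
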